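/- arXiv:1908.11845 — 2 statements merged into one kernel-verified Lean document; each statement's English description precedes it below -/
import Mathlib

section
/- The function f(θ) = (2θ/π) · (cos θ - sin θ + 1)/(cos θ + sin θ - 1) is strictly decreasing on the interval (0, π/2). -/
open Real

private lemma aux_facts {x : ℝ} (hx : x ∈ Set.Ioo 0 (π/2)) :
    0 < Real.sin (x/2) ∧ 0 < Real.cos (x/2) ∧ Real.sin (x/2) < Real.cos (x/2) := by
  obtain ⟨h0, h2⟩ := hx
  have hpi := Real.pi_pos
  have hs : 0 < Real.sin (x/2) := Real.sin_pos_of_pos_of_lt_pi (by linarith) (by linarith)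
  have hc : 0 < Real.cos (x/2) := Real.cos_pos_of_mem_Ioo ⟨by linarith, by linarith⟩
  have hcx : 0 < Real.cos x := Real.cos_pos_of_mem_Ioo ⟨by linarith, by linarith⟩
  have hcos2 : Real.cos x = Real.cos (x/2)^2 - Real.sin (x/2)^2 := by
    rw [show x = 2*(x/2) by ring, Real.cos_two_mul']
    ring_nf
  refine ⟨hs, hc, ?_⟩
  nlinarith [hcx, hs, hc]

private lemma g_anti : StrictAntiOn (fun θ : ℝ =>
    (2 * θ / π) * (Real.cos (θ/2) / Real.sin (θ/2))) (Set.Ioo 0 (π / 2)) := by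
  have hpi := Real.pi_pos
  apply strictAntiOn_of_deriv_neg (convex_Ioo 0 (π/2))
  · apply ContinuousOn.mul
    · fun_prop
    · apply ContinuousOn.div
      · fun_prop
      · fun_prop
      · intro x hx
        exact ne_of_gt (aux_facts hx).1
  · intro x hx
    rw [interior_Ioo] at hx
    obtain ⟨hs, hc, hsc⟩ := aux_facts hx
    set s := Real.sin (x/2) with hsdef
    set c := Real.cos (x/2) with hcdef
    have hsne : s ≠ 0 := ne_of_gt hs
    have hline : HasDerivAt (fun t : ℝ => 2 * t / π) (2 * 1 / π) x :=
      ((hasDerivAt_id x).const_mul 2).div_const π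
    have hcd : HasDerivAt (fun t : ℝ => Real.cos (t/2)) (-Real.sin (x/2) * (1/2)) x :=
      by have h := (Real.hasDerivAt_cos (x/2)).comp x ((hasDerivAt_id' x).div_const 2); exact h
    have hsd : HasDerivAt (fun t : ℝ => Real.sin (t/2)) (Real.cos (x/2) * (1/2)) x :=
      by have h := (Real.hasDerivAt_sin (x/2)).comp x ((hasDerivAt_id' x).div_const 2); exact h
    have hg : HasDerivAt (fun t : ℝ => (2 * t / π) * (Real.cos (t/2) / Real.sin (t/2)))
        (2 * 1 / π * (c / s) + (2 * x / π) * ((-s * (1/2) * s - c * (c * (1/2))) / s ^ 2)) x :=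
      hline.mul (hcd.div hsd hsne)
    rw [hg.deriv]
    have hpyth : s ^ 2 + c ^ 2 = 1 := Real.sin_sq_add_cos_sq (x/2)
    have hsin2 : Real.sin x = 2 * s * c := by
      rw [show x = 2*(x/2) by ring, Real.sin_two_mul]
    have hlt : Real.sin x < x := Real.sin_lt hx.1
    have hE : 2 * 1 / π * (c / s) + (2 * x / π) * ((-s * (1/2) * s - c * (c * (1/2))) / s ^ 2)
        = (Real.sin x - x) / (π * s ^ 2) := by
      rw [hsin2]
      have h1 : c ^ 2 = 1 - s ^ 2 := by linarith
      field_simp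
      ring_nf
      linear_combination (-x) * hpyth
    rw [hE]
    apply div_neg_of_neg_of_pos
    · linarith
    · exact mul_pos hpi (pow_pos hs 2)

theorem stmt_1 :
    StrictAntiOn (fun θ : ℝ =>
      (2 * θ / π) * ((Real.cos θ - Real.sin θ + 1) / (Real.cos θ + Real.sin θ - 1)))
      (Set.Ioo 0 (π / 2)) := by
  have key : ∀ x ∈ Set.Ioo 0 (π/2),
      (2 * x / π) * ((Real.cos x - Real.sin x + 1) / (Real.cos x + Real.sin x - 1))
      = (2 * x / π) * (Real.cos (x/2) / Real.sin (x/2)) := by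
    intro x hx
    obtain ⟨hs, hc, hsc⟩ := aux_facts hx
    set s := Real.sin (x/2) with hsdef
    set c := Real.cos (x/2) with hcdef
    have hpyth : s ^ 2 + c ^ 2 = 1 := Real.sin_sq_add_cos_sq (x/2)
    have hsin2 : Real.sin x = 2 * s * c := by
      rw [show x = 2*(x/2) by ring, Real.sin_two_mul]
    have hcos2 : Real.cos x = 2 * c ^ 2 - 1 := by
      rw [show x = 2*(x/2) by ring, Real.cos_two_mul]
    have hdenpos : (0:ℝ) < 2 * s * (c - s) := by
      apply mul_pos (by linarith) (by linarith)
    congr 1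
    rw [hsin2, hcos2, show (2 * c ^ 2 - 1 + 2 * s * c - 1 : ℝ) = 2 * s * (c - s) from by
      nlinarith [hpyth], div_eq_div_iff (ne_of_gt hdenpos) (ne_of_gt hs)]
    ring
  intro x hx y hy hxy
  simp only
  rw [key x hx, key y hy]
  exact g_anti hx hy hxy
end

section
/- For every θ ∈ (0, π/2), one has 1 ≤ (2θ/π) · (cos θ - sin θ + 1)/(cos θ + sin θ - 1) ≤ 4/π. -/
open Real

private lemma f_hasDeriv (x : ℝ) :
    HasDerivAt (fun t : ℝ => t * Real.cos t - π / 4 * Real.sin t)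
      (Real.cos x - x * Real.sin x - π / 4 * Real.cos x) x := by
  have h1 := (hasDerivAt_id x).mul (Real.hasDerivAt_cos x)
  have h2 := (Real.hasDerivAt_sin x).const_mul (π / 4)
  refine (h1.sub h2).congr_deriv ?_
  simp only [id_eq]; ring

private lemma g_hasDeriv (x : ℝ) :
    HasDerivAt (fun t : ℝ => Real.cos t - t * Real.sin t - π / 4 * Real.cos t)
      ((π / 4 - 2) * Real.sin x - x * Real.cos x) x := by
  have h1 := Real.hasDerivAt_cos x
  have h2 := (hasDerivAt_id x).mul (Real.hasDerivAt_sin x)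
  have h3 := (Real.hasDerivAt_cos x).const_mul (π / 4)
  refine ((h1.sub h2).sub h3).congr_deriv ?_
  simp only [id_eq]; ring

private lemma key_concave :
    ConcaveOn ℝ (Set.Icc 0 (π / 4))
      (fun t : ℝ => t * Real.cos t - π / 4 * Real.sin t) := by
  have hd1 : deriv (fun t : ℝ => t * Real.cos t - π / 4 * Real.sin t)
      = fun t : ℝ => Real.cos t - t * Real.sin t - π / 4 * Real.cos t := by
    funext x; exact (f_hasDeriv x).deriv
  apply concaveOn_of_deriv2_nonpos' (convex_Icc _ _)
  · intro x _; exact (f_hasDeriv x).differentiableAt.differentiableWithinAt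
  · intro x _
    rw [hd1]; exact (g_hasDeriv x).differentiableAt.differentiableWithinAt
  · intro x hx
    have hx0 : (0:ℝ) ≤ x := hx.1
    have hx4 : x ≤ π / 4 := hx.2
    have hπ : (0:ℝ) < π := Real.pi_pos
    have hs : 0 ≤ Real.sin x := Real.sin_nonneg_of_nonneg_of_le_pi hx0 (by linarith)
    have hc : 0 ≤ Real.cos x := Real.cos_nonneg_of_mem_Icc ⟨by linarith, by linarith⟩
    have : deriv^[2] (fun t : ℝ => t * Real.cos t - π / 4 * Real.sin t) x
        = (π / 4 - 2) * Real.sin x - x * Real.cos x := by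
      simp only [Function.iterate_succ, Function.iterate_zero, Function.comp_apply, id]
      rw [hd1]
      exact (g_hasDeriv x).deriv
    rw [this]
    nlinarith [Real.pi_lt_d2]

private lemma lemA {t : ℝ} (h0 : 0 ≤ t) (h4 : t ≤ π / 4) :
    π / 4 * Real.sin t ≤ t * Real.cos t := by
  have hπ : (0:ℝ) < π := Real.pi_pos
  have hc := key_concave
  have h0m : (0:ℝ) ∈ Set.Icc 0 (π / 4) := ⟨le_refl _, by linarith⟩
  have h4m : (π / 4 : ℝ) ∈ Set.Icc 0 (π / 4) := ⟨by linarith, le_refl _⟩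
  have hb0 : 0 ≤ t / (π / 4) := by positivity
  have ha0 : 0 ≤ 1 - t / (π / 4) := by
    rw [sub_nonneg, div_le_one (by positivity)]; exact h4
  have hab : (1 - t / (π / 4)) + t / (π / 4) = 1 := by ring
  have := hc.2 h0m h4m ha0 hb0 hab
  have hx : (1 - t / (π / 4)) • (0:ℝ) + (t / (π / 4)) • (π / 4) = t := by
    field_simp
    simp only [smul_eq_mul]
    field_simp
    ring
  rw [hx] at this
  have hf0 : (0:ℝ) * Real.cos 0 - π / 4 * Real.sin 0 = 0 := by simp
  have hf4 : (π / 4) * Real.cos (π / 4) - π / 4 * Real.sin (π / 4) = 0 := by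
    rw [Real.cos_pi_div_four, Real.sin_pi_div_four]; ring
  simp only [smul_eq_mul] at this
  nlinarith [this]

theorem stmt_3 (θ : ℝ) (hθ : θ ∈ Set.Ioo 0 (π / 2)) :
    1 ≤ (2 * θ / π) * ((Real.cos θ - Real.sin θ + 1) / (Real.cos θ + Real.sin θ - 1)) ∧
    (2 * θ / π) * ((Real.cos θ - Real.sin θ + 1) / (Real.cos θ + Real.sin θ - 1)) ≤ 4 / π := by
  obtain ⟨hθ0, hθ2⟩ := hθ
  have hπ : (0:ℝ) < π := Real.pi_pos
  set t := θ / 2 with ht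
  have ht0 : 0 < t := by positivity
  have ht4 : t < π / 4 := by rw [ht]; linarith
  set s := Real.sin t with hs
  set c := Real.cos t with hcdef
  have hsc : s ^ 2 + c ^ 2 = 1 := by rw [hs, hcdef]; exact Real.sin_sq_add_cos_sq t
  have hs0 : 0 < s := Real.sin_pos_of_pos_of_lt_pi ht0 (by linarith)
  have hc0 : 0 < c := Real.cos_pos_of_mem_Ioo ⟨by linarith, by linarith⟩
  have hcs : s < c := by
    have h1 : s < Real.sin (π / 4) := Real.sin_lt_sin_of_lt_of_le_pi_div_two (by linarith) (by linarith) ht4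
    have h2 : Real.cos (π / 4) < c := by
      rw [hcdef]
      exact Real.cos_lt_cos_of_nonneg_of_le_pi (le_of_lt ht0) (by linarith) ht4
    rw [Real.sin_pi_div_four] at h1
    rw [Real.cos_pi_div_four] at h2
    linarith
  have hcosθ : Real.cos θ = c ^ 2 - s ^ 2 := by
    have : θ = 2 * t := by rw [ht]; ring
    rw [this, Real.cos_two_mul]
    nlinarith [hsc]
  have hsinθ : Real.sin θ = 2 * s * c := by
    have : θ = 2 * t := by rw [ht]; ring
    rw [this, Real.sin_two_mul]
  have hN : Real.cos θ - Real.sin θ + 1 = 2 * c * (c - s) := by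
    rw [hcosθ, hsinθ]; nlinarith [hsc]
  have hD : Real.cos θ + Real.sin θ - 1 = 2 * s * (c - s) := by
    rw [hcosθ, hsinθ]; nlinarith [hsc]
  have hDpos : 0 < 2 * s * (c - s) := by
    apply mul_pos (by positivity); linarith
  have hratio : (Real.cos θ - Real.sin θ + 1) / (Real.cos θ + Real.sin θ - 1) = c / s := by
    rw [hN, hD]
    have hcs' : c - s ≠ 0 := (sub_pos.mpr hcs).ne'
    field_simp
  rw [hratio]
  have hθt : 2 * θ / π = 4 * t / π := by rw [ht]; ring
  rw [hθt]
  constructor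
  · -- 1 ≤ (4t/π)(c/s)  ⇔  π s ≤ 4 t c
    have hA : π / 4 * s ≤ t * c := lemA (le_of_lt ht0) (le_of_lt ht4)
    rw [div_mul_div_comm, le_div_iff₀ (by positivity), one_mul]
    nlinarith
  · -- (4t/π)(c/s) ≤ 4/π  ⇔  t c ≤ s
    have hB : t * c ≤ s := by
      have := Real.lt_tan ht0 (by linarith)
      rw [Real.tan_eq_sin_div_cos] at this
      rw [lt_div_iff₀ hc0] at this
      rw [hs, hcdef]
      nlinarith [this]
    rw [div_mul_div_comm, div_le_div_iff₀ (by positivity) hπ]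
    nlinarith
end
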